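/- For β > β_c: for every ε > 0 and every k ∈ ℕ there exists N ∈ ℕ with N ≥ k such that for all n > N, the Gibbs measure of the k-th stage Cantor set satisfies μ_{β,n}(C_k) > 1 − ε. More precisely, μ_{β,n}(C_k) > 1 − J_β e^{−(βα−h)(n−k)} for all n > k, where J_β = sup_{n∈ℕ} K_1 / (K_1(1 − e^{−bn}) + 2e^{−(h+b)n}), with b = βα − h and K_1 = 1/(1 − e^{−b}). -/

import Mathlib

open MeasureTheory Set Real Filter

noncomputable def cantorStage : ℕ → Set ℝ
  | 0 => Set.Icc 0 1
  | (m+1) => (fun x => x / 3) '' cantorStage m ∪ (fun x => (x + 2) / 3) '' cantorStage m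

noncomputable def Bset (m : ℕ) : Set ℝ := cantorStage (m - 1) \ cantorStage m

noncomputable def psi (A : ℕ → ℝ) (n : ℕ) (x : ℝ) : ℝ :=
  -∑ k ∈ Finset.Icc 1 n, A k * (Bset k).indicator (fun _ => (1:ℝ)) x

noncomputable def hc : ℝ := Real.log (3/2)

noncomputable def psiα (α : ℝ) : ℕ → ℝ → ℝ := psi (fun k => α * k)

noncomputable def Zf (α β : ℝ) (n : ℕ) : ℝ :=
  ∫ x in Set.Icc (0:ℝ) 1, Real.exp (-β * psiα α n x)

noncomputable def gibbs (α β : ℝ) (n : ℕ) (A : Set ℝ) : ℝ :=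
  (∫ x in A ∩ Set.Icc (0:ℝ) 1, Real.exp (-β * psiα α n x)) / Zf α β n

/-! The potential `-β ψ_n` equals `β α m` on the shell `B_m = C_{m-1} \ C_m` and vanishes on `C_n`,
while `|B_m| = (2/3)^m / 2` and `|C_n| = (2/3)^n`. With `b = β α - h`, so that
`e^{βαm} (2/3)^m = e^{bm}`, the integral of `e^{-β ψ_n}` over `C_k` is
`½ ∑_{m=k+1}^n e^{bm} + (2/3)^n`, hence
`1 - μ_{β,n}(C_k) = ∑_{m=1}^k e^{bm} / (∑_{m=1}^n e^{bm} + 2 (2/3)^n)`. For `b > 0` the numerator is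
`K₁ (e^{bk} - 1) < K₁ e^{bk}` and the denominator is `e^{bn} D_n`, where `J_β = sup_n K₁ / D_n` is
finite because `D_n ≥ 1`. The first claim follows by letting `n → ∞`. -/

theorem setIntegral_eq_sum_sdiff_add_of_antitone {α E : Type*} [MeasurableSpace α]
    [NormedAddCommGroup E] [NormedSpace ℝ E] {μ : Measure α} {s : ℕ → Set α} (hs : Antitone s)
    (hsm : ∀ n, MeasurableSet (s n)) {f : α → E} {k n : ℕ} (hf : IntegrableOn f (s k) μ)
    (hkn : k ≤ n) :
    ∫ x in s k, f x ∂μ =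
      ∑ m ∈ Finset.Ioc k n, ∫ x in s (m - 1) \ s m, f x ∂μ + ∫ x in s n, f x ∂μ := by
  induction n, hkn using Nat.le_induction with
  | base => simp
  | succ n hkn ih =>
    rw [Finset.sum_Ioc_succ_top hkn, Nat.add_sub_cancel,
      setIntegral_sdiff (hsm _) (hf.mono_set (hs hkn)) (hs n.le_succ), ih]
    abel

lemma cantorStage_succ (m : ℕ) :
    cantorStage (m + 1) = AffineMap.homothety (0 : ℝ) (1 / 3 : ℝ) '' cantorStage m ∪
      AffineMap.homothety (1 : ℝ) (1 / 3 : ℝ) '' cantorStage m := by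
  rw [cantorStage]
  congr 1 <;> congr 1 <;> ext x <;>
    simp only [AffineMap.homothety_apply, vsub_eq_sub, vadd_eq_add, smul_eq_mul] <;> ring

lemma cantorStage_subset_Icc (m : ℕ) : cantorStage m ⊆ Icc 0 1 := by
  induction m with
  | zero => exact subset_rfl
  | succ m ih =>
    rintro _ (⟨x, hx, rfl⟩ | ⟨x, hx, rfl⟩) <;> obtain ⟨h0, h1⟩ := ih hx <;>
      constructor <;> linarith

lemma antitone_cantorStage : Antitone cantorStage := by
  refine antitone_nat_of_succ_le fun m => ?_
  induction m with
  | zero =>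
    rintro _ (⟨x, hx, rfl⟩ | ⟨x, hx, rfl⟩) <;> obtain ⟨h0, h1⟩ := hx <;>
      constructor <;> linarith
  | succ m ih => exact union_subset_union (image_mono ih) (image_mono ih)

lemma isCompact_cantorStage (m : ℕ) : IsCompact (cantorStage m) := by
  induction m with
  | zero => exact isCompact_Icc
  | succ m ih => exact (ih.image (by fun_prop)).union (ih.image (by fun_prop))

lemma measurableSet_cantorStage (m : ℕ) : MeasurableSet (cantorStage m) :=
  (isCompact_cantorStage m).isClosed.measurableSet

lemma volume_cantorStage (m : ℕ) : volume (cantorStage m) = ENNReal.ofReal ((2 / 3) ^ m) := by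
  induction m with
  | zero => simp [cantorStage]
  | succ m ih =>
    have hdisj : Disjoint (AffineMap.homothety (0 : ℝ) (1 / 3 : ℝ) '' cantorStage m)
        (AffineMap.homothety (1 : ℝ) (1 / 3 : ℝ) '' cantorStage m) := by
      rw [disjoint_left]
      rintro _ ⟨x, hx, rfl⟩ ⟨y, hy, hxy⟩
      simp only [AffineMap.homothety_apply, vsub_eq_sub, vadd_eq_add, smul_eq_mul] at hxy
      linarith [(cantorStage_subset_Icc m hx).2, (cantorStage_subset_Icc m hy).1]
    have hmeas := ((isCompact_cantorStage m).image
      (AffineMap.homothety (1 : ℝ) (1 / 3 : ℝ)).continuous_of_finiteDimensional).measurableSet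
    rw [cantorStage_succ, measure_union hdisj hmeas, Measure.addHaar_image_homothety,
      Measure.addHaar_image_homothety, ih, ← two_mul, ← mul_assoc, ← ENNReal.ofReal_ofNat,
      ← ENNReal.ofReal_mul (by norm_num), ← ENNReal.ofReal_mul (by positivity)]
    norm_num [pow_succ]
    ring

lemma volume_real_cantorStage (m : ℕ) : volume.real (cantorStage m) = (2 / 3) ^ m := by
  rw [measureReal_def, volume_cantorStage, ENNReal.toReal_ofReal (by positivity)]

lemma measurableSet_Bset (m : ℕ) : MeasurableSet (Bset m) :=
  (measurableSet_cantorStage _).diff (measurableSet_cantorStage _)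

lemma Bset_disjoint_cantorStage {m n : ℕ} (h : m ≤ n) : Disjoint (Bset m) (cantorStage n) :=
  disjoint_left.2 fun _ hx hn => hx.2 (antitone_cantorStage h hn)

lemma Bset_subset_cantorStage {m n : ℕ} (h : n < m) : Bset m ⊆ cantorStage n :=
  fun _ hx => antitone_cantorStage (Nat.le_sub_one_of_lt h) hx.1

lemma eq_of_mem_Bset_of_mem_Bset {j m : ℕ} {x : ℝ} (hj : x ∈ Bset j) (hm : x ∈ Bset m) :
    j = m := by
  by_contra hne
  rcases lt_or_gt_of_ne hne with h | h
  · exact disjoint_left.1 (Bset_disjoint_cantorStage le_rfl) hj (Bset_subset_cantorStage h hm)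
  · exact disjoint_left.1 (Bset_disjoint_cantorStage le_rfl) hm (Bset_subset_cantorStage h hj)

lemma volume_real_Bset {m : ℕ} (hm : 1 ≤ m) : volume.real (Bset m) = (2 / 3) ^ m / 2 := by
  obtain ⟨m, rfl⟩ := Nat.exists_eq_add_of_le' hm
  rw [Bset, measureReal_sdiff (antitone_cantorStage (Nat.sub_le _ _)) (measurableSet_cantorStage _)
    (by simp [volume_cantorStage]), Nat.add_sub_cancel, volume_real_cantorStage,
    volume_real_cantorStage]
  ring

lemma psi_eq_zero_of_mem_cantorStage (A : ℕ → ℝ) {n : ℕ} {x : ℝ} (hx : x ∈ cantorStage n) :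
    psi A n x = 0 := by
  rw [psi, neg_eq_zero]
  refine Finset.sum_eq_zero fun k hk => ?_
  have hxk : x ∉ Bset k := disjoint_right.1 (Bset_disjoint_cantorStage (Finset.mem_Icc.1 hk).2) hx
  rw [indicator_of_notMem hxk, mul_zero]

lemma psi_eq_of_mem_Bset (A : ℕ → ℝ) {m n : ℕ} (hm : 1 ≤ m) (hmn : m ≤ n) {x : ℝ}
    (hx : x ∈ Bset m) : psi A n x = -A m := by
  rw [psi, Finset.sum_eq_single_of_mem m (Finset.mem_Icc.2 ⟨hm, hmn⟩), indicator_of_mem hx, mul_one]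
  intro k _ hk
  rw [indicator_of_notMem fun hxk => hk (eq_of_mem_Bset_of_mem_Bset hxk hx), mul_zero]

lemma measurable_psi (A : ℕ → ℝ) (n : ℕ) : Measurable (psi A n) :=
  (Finset.measurable_sum _ fun k _ =>
    (measurable_const.indicator (measurableSet_Bset k)).const_mul (A k)).neg

lemma abs_psi_le (A : ℕ → ℝ) (n : ℕ) (x : ℝ) : |psi A n x| ≤ ∑ k ∈ Finset.Icc 1 n, |A k| := by
  rw [psi, abs_neg]
  refine (Finset.abs_sum_le_sum_abs _ _).trans (Finset.sum_le_sum fun k _ => ?_)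
  rw [abs_mul]
  refine mul_le_of_le_one_right (abs_nonneg _) ?_
  by_cases hx : x ∈ Bset k <;> simp [hx]

lemma integrableOn_exp_psi (A : ℕ → ℝ) (β : ℝ) (n : ℕ) {s : Set ℝ} (hs : volume s ≠ ⊤) :
    IntegrableOn (fun x => exp (-β * psi A n x)) s := by
  refine Measure.integrableOn_of_bounded hs
    ((measurable_const.mul (measurable_psi A n)).exp.aestronglyMeasurable)
    (M := exp (|β| * ∑ k ∈ Finset.Icc 1 n, |A k|)) (ae_of_all _ fun x => ?_)
  rw [Real.norm_eq_abs, abs_of_pos (exp_pos _), exp_le_exp]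
  calc -β * psi A n x ≤ |β| * |psi A n x| := by rw [← abs_mul, neg_mul]; exact neg_le_abs _
    _ ≤ |β| * ∑ k ∈ Finset.Icc 1 n, |A k| := by gcongr; exact abs_psi_le A n x

lemma setIntegral_cantorStage_exp_psi (A : ℕ → ℝ) (β : ℝ) {k n : ℕ} (hkn : k ≤ n) :
    ∫ x in cantorStage k, exp (-β * psi A n x) =
      ∑ m ∈ Finset.Ioc k n, exp (β * A m) * ((2 / 3) ^ m / 2) + (2 / 3) ^ n := by
  rw [setIntegral_eq_sum_sdiff_add_of_antitone antitone_cantorStage measurableSet_cantorStage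
    (integrableOn_exp_psi A β n (by simp [volume_cantorStage])) hkn]
  congr 1
  · refine Finset.sum_congr rfl fun m hm => ?_
    obtain ⟨hkm, hmn⟩ := Finset.mem_Ioc.1 hm
    have hconst : EqOn (fun x => exp (-β * psi A n x)) (fun _ => exp (β * A m)) (Bset m) :=
      fun x hx => by simp only [psi_eq_of_mem_Bset A (by omega) hmn hx, mul_neg, neg_mul, neg_neg]
    change ∫ x in Bset m, _ = _
    rw [setIntegral_congr_fun (measurableSet_Bset m) hconst, setIntegral_const,
      volume_real_Bset (by omega), smul_eq_mul, mul_comm]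
  · have hconst : EqOn (fun x => exp (-β * psi A n x)) (fun _ => 1) (cantorStage n) :=
      fun x hx => by simp only [psi_eq_zero_of_mem_cantorStage A hx, mul_zero, exp_zero]
    rw [setIntegral_congr_fun (measurableSet_cantorStage n) hconst, setIntegral_const,
      volume_real_cantorStage, smul_eq_mul, mul_one]

lemma exp_neg_hc_mul (m : ℕ) : exp (-hc * m) = (2 / 3) ^ m := by
  rw [mul_comm, exp_nat_mul, hc, exp_neg, exp_log (by norm_num)]
  norm_num

lemma gibbs_cantorStage (α β : ℝ) {k n : ℕ} (hkn : k ≤ n) :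
    gibbs α β n (cantorStage k) =
      (∑ m ∈ Finset.Ioc k n, exp ((β * α - hc) * m) / 2 + (2 / 3) ^ n) /
        (∑ m ∈ Finset.Ioc 0 n, exp ((β * α - hc) * m) / 2 + (2 / 3) ^ n) := by
  have hint : ∀ j ≤ n, ∫ x in cantorStage j, exp (-β * psiα α n x) =
      ∑ m ∈ Finset.Ioc j n, exp ((β * α - hc) * m) / 2 + (2 / 3) ^ n := fun j hj => by
    rw [psiα, setIntegral_cantorStage_exp_psi _ _ hj]
    congr 1
    refine Finset.sum_congr rfl fun m _ => ?_
    rw [← exp_neg_hc_mul, mul_div_assoc', ← exp_add]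
    ring_nf
  rw [gibbs, Zf, inter_eq_left.2 (cantorStage_subset_Icc k), hint k hkn]
  exact congrArg _ (hint 0 n.zero_le)

lemma sum_Ioc_exp_mul {b : ℝ} (hb : b ≠ 0) (k : ℕ) :
    ∑ m ∈ Finset.Ioc 0 k, exp (b * m) = (exp (b * k) - 1) / (1 - exp (-b)) := by
  have hx : exp b ≠ 1 := by simpa using hb
  have hx' : 1 - exp (-b) ≠ 0 := sub_ne_zero.2 (Ne.symm (by simpa using hb))
  simp_rw [← Finset.Ico_add_one_add_one_eq_Ioc, zero_add, mul_comm b, exp_nat_mul]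
  rw [geom_sum_Ico hx (by omega), exp_neg]
  field_simp
  ring

lemma one_sub_sum_Ioc_exp_div_lt {b c : ℝ} (hb : 0 < b) (hcpos : 0 < c) {k n : ℕ} (hkn : k ≤ n) :
    1 - (∑ m ∈ Finset.Ioc k n, exp (b * m) / 2 + c) / (∑ m ∈ Finset.Ioc 0 n, exp (b * m) / 2 + c)
      < 1 / (1 - exp (-b)) / (1 / (1 - exp (-b)) * (1 - exp (-b * n)) + 2 * c * exp (-b * n))
        * exp (-b * (n - k)) := by
  set K := 1 / (1 - exp (-b)) with hK
  have hKpos : 0 < K := one_div_pos.2 (sub_pos.2 (exp_lt_one_iff.2 (neg_lt_zero.2 hb)))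
  have hS : ∀ j : ℕ, ∑ m ∈ Finset.Ioc 0 j, exp (b * m) = K * (exp (b * j) - 1) := fun j => by
    rw [sum_Ioc_exp_mul hb.ne', hK, one_div_mul_eq_div]
  have hsplit : ∑ m ∈ Finset.Ioc k n, exp (b * m) =
      ∑ m ∈ Finset.Ioc 0 n, exp (b * m) - ∑ m ∈ Finset.Ioc 0 k, exp (b * m) := by
    rw [← Finset.sum_Ioc_consecutive _ k.zero_le hkn, add_sub_cancel_left]
  have hEk : 0 < exp (b * k) := exp_pos _
  have hEn : 1 ≤ exp (b * n) := one_le_exp (by positivity)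
  have hden : 0 < K * (exp (b * n) - 1) + 2 * c := by nlinarith
  have hlhs : 1 - (∑ m ∈ Finset.Ioc k n, exp (b * m) / 2 + c) /
      (∑ m ∈ Finset.Ioc 0 n, exp (b * m) / 2 + c) =
      K * (exp (b * k) - 1) / (K * (exp (b * n) - 1) + 2 * c) := by
    rw [← Finset.sum_div, ← Finset.sum_div, hsplit, hS, hS]
    field_simp
    ring
  have hrhs : K / (K * (1 - exp (-b * n)) + 2 * c * exp (-b * n)) * exp (-b * (n - k)) =
      K * exp (b * k) / (K * (exp (b * n) - 1) + 2 * c) := by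
    have hexp : exp (-b * (n - k)) = exp (b * k) / exp (b * n) := by rw [← exp_sub]; ring_nf
    rw [hexp, neg_mul, exp_neg]
    field_simp
  rw [hlhs, hrhs]
  gcongr
  linarith

lemma one_le_div_one_sub_exp_mul_add (h : ℝ) {b : ℝ} (hb : 0 < b) (n : ℕ) :
    1 ≤ 1 / (1 - exp (-b)) * (1 - exp (-b * n)) + 2 * exp (-(h + b) * n) := by
  rcases n.eq_zero_or_pos with rfl | hn
  · norm_num
  have hexp : exp (-b * n) ≤ exp (-b) :=
    exp_le_exp.2 (by nlinarith [(Nat.one_le_cast (α := ℝ)).2 hn])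
  have hpos : 0 < 1 - exp (-b) := sub_pos.2 (exp_lt_one_iff.2 (neg_lt_zero.2 hb))
  rw [one_div_mul_eq_div]
  linarith [(one_le_div hpos).2 (by linarith : 1 - exp (-b) ≤ 1 - exp (-b * n)),
    exp_pos (-(h + b) * n)]

theorem stmt9 (α β : ℝ) (hα : 0 < α) (hβc : hc / α < β) :
    let b : ℝ := β*α - hc
    let K1 : ℝ := 1 / (1 - Real.exp (-b))
    let Jβ : ℝ := ⨆ n : ℕ, K1 / (K1 * (1 - Real.exp (-b * n)) + 2 * Real.exp (-(hc + b) * n))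
    (∀ ε > 0, ∀ k : ℕ, ∃ N : ℕ, k ≤ N ∧ ∀ n > N, gibbs α β n (cantorStage k) > 1 - ε) ∧
    (∀ k n : ℕ, k < n →
      gibbs α β n (cantorStage k) > 1 - Jβ * Real.exp (-b * ((n:ℝ) - k))) := by
  intro b K1 Jβ
  have hb : 0 < b := sub_pos.2 (by linarith [(div_lt_iff₀ hα).1 hβc])
  have hK1 : 0 ≤ K1 := one_div_nonneg.2 (sub_nonneg.2 (exp_le_one_iff.2 (by linarith)))
  have hJ : ∀ n : ℕ,
      K1 / (K1 * (1 - exp (-b * n)) + 2 * exp (-(hc + b) * n)) ≤ Jβ := fun n =>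
    le_ciSup ⟨K1, forall_mem_range.2 fun n =>
      div_le_self hK1 (one_le_div_one_sub_exp_mul_add hc hb n)⟩ n
  have hbound : ∀ k n : ℕ, k ≤ n → gibbs α β n (cantorStage k) > 1 - Jβ * exp (-b * (n - k)) := by
    intro k n hkn
    rw [gibbs_cantorStage α β hkn, gt_iff_lt, sub_lt_comm]
    refine (one_sub_sum_Ioc_exp_div_lt hb (by positivity) hkn).trans_le ?_
    rw [mul_assoc 2, ← exp_neg_hc_mul, ← exp_add, ← add_mul, ← neg_add]
    exact mul_le_mul_of_nonneg_right (hJ n) (exp_pos _).le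
  refine ⟨fun ε hε k => ?_, fun k n hkn => hbound k n hkn.le⟩
  have htend : Tendsto (fun n : ℕ => Jβ * exp (-b * ((n : ℝ) - k))) atTop (nhds 0) := by
    have hlin : Tendsto (fun n : ℕ => -b * ((n : ℝ) - k)) atTop atBot := by
      simpa [← sub_eq_add_neg] using (tendsto_atTop_add_const_right _ (-(k : ℝ))
        tendsto_natCast_atTop_atTop).const_mul_atTop_of_neg (neg_lt_zero.2 hb)
    simpa using (tendsto_exp_atBot.comp hlin).const_mul Jβ
  obtain ⟨N, hN⟩ := eventually_atTop.1 (htend.eventually (gt_mem_nhds hε))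
  refine ⟨max N k, le_max_right _ _, fun n hn => ?_⟩
  linarith [hbound k n (by omega), hN n (by omega)]
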